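/- arXiv:1108.4217 — 2 statements merged into one kernel-verified Lean document; each statement's English description precedes it below -/
import Mathlib

section
/- Suppose (λ*, x*, t*) is an optimal solution of the BILP max Σᵢ tᵢλᵢ − t over the BILP feasible set, with optimal value c* = Σᵢ tᵢλᵢ* − t*. If c* ≤ 0, then every (x, t) in the BILP feasible set (in particular, every (x, t) ∈ T ∩ D̃ with x ∈ {0,1}ⁿ, provided D̃ ⊆ P) satisfies pᵀx − t ≤ γ, i.e., lies in the upper halfspace H₊ = {(x,t) : pᵀx − t ≤ γ} of the hyperplane H through the points (vⁱ, tᵢ). -/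
open scoped BigOperators

/-- The Lovász extension of a set function `f` on subsets of `Fin n`. -/
noncomputable def lovasz {n : ℕ} (f : Finset (Fin n) → ℝ) (p : Fin n → ℝ) : ℝ := by
  classical
  exact
    let vals : List ℝ := ((Finset.univ.image p).sort (· ≤ ·)).reverse
    let m : ℕ := vals.length
    let U : ℕ → Finset (Fin n) := fun j => Finset.univ.filter (fun i => vals.getD j 0 ≤ p i)
    (∑ j ∈ Finset.range (m - 1), (vals.getD j 0 - vals.getD (j + 1) 0) * f (U j))
      + vals.getD (m - 1) 0 * f (U (m - 1))

/-- `D̃ = {(x,t) : x ∈ [0,1]ⁿ, f̂(x) ≤ t}`. -/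
noncomputable def Dtilde {n : ℕ} (f : Finset (Fin n) → ℝ) : Set ((Fin n → ℝ) × ℝ) :=
  {q | (∀ i, 0 ≤ q.1 i ∧ q.1 i ≤ 1) ∧ lovasz f q.1 ≤ q.2}

/-- `P = {(x,t) : Ax + at ≤ b}`. -/
def Pset {n m : ℕ} (A : Matrix (Fin m) (Fin n) ℝ) (a b : Fin m → ℝ) :
    Set ((Fin n → ℝ) × ℝ) :=
  {q | ∀ i, A.mulVec q.1 i + a i * q.2 ≤ b i}

/-- The BILP feasible set. -/
def BILPfeas {n m : ℕ} (v : Fin (n + 1) → Fin n → ℝ) (A : Matrix (Fin m) (Fin n) ℝ)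
    (a b : Fin m → ℝ) (lam : Fin (n + 1) → ℝ) (x : Fin n → ℝ) (t : ℝ) : Prop :=
  (∀ i, 0 ≤ lam i) ∧ (∑ i, lam i) = 1 ∧ x = ∑ i, lam i • v i ∧
    (∀ j, x j = 0 ∨ x j = 1) ∧ ∀ i, A.mulVec x i + a i * t ≤ b i

/-
A point `x = ∑ λᵢ vⁱ` with `∑ λᵢ = 1` satisfies `pᵀx = ∑ λᵢ pᵀvⁱ = ∑ λᵢ tᵢ + γ`, because every
`(vⁱ, tᵢ)` lies on `H`. Hence on the BILP feasible set `pᵀx - t - γ` is exactly the BILP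
objective, which is bounded by `c* ≤ 0`. A binary point of `T ∩ D̃ ⊆ T ∩ P` is BILP feasible once
`x ∈ S` is written with barycentric weights.
-/

open Finset

theorem dotProduct_sum_smul_of_sub_eq {ι κ : Type*} [Fintype ι] [Fintype κ]
    (p : κ → ℝ) (v : ι → κ → ℝ) (c : ι → ℝ) {γ : ℝ} (hv : ∀ i, p ⬝ᵥ v i - c i = γ)
    {w : ι → ℝ} (hw : ∑ i, w i = 1) :
    p ⬝ᵥ ∑ i, w i • v i = ∑ i, c i * w i + γ := by
  have hvi : ∀ i, p ⬝ᵥ v i = c i + γ := fun i => by linarith [hv i]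
  simp only [dotProduct_sum, dotProduct_smul, hvi, smul_eq_mul, mul_comm (w _), add_mul,
    sum_add_distrib, ← mul_sum, hw, mul_one]

theorem exists_sum_smul_eq_of_mem_convexHull_range {ι E : Type*} [Fintype ι] [AddCommGroup E]
    [Module ℝ E] {v : ι → E} {x : E} (hx : x ∈ convexHull ℝ (Set.range v)) :
    ∃ w : ι → ℝ, (∀ i, 0 ≤ w i) ∧ ∑ i, w i = 1 ∧ ∑ i, w i • v i = x := by
  classical
  rw [convexHull_range_eq_exists_affineCombination] at hx
  obtain ⟨s, w, hw₀, hw₁, rfl⟩ := hx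
  refine ⟨fun i => if i ∈ s then w i else 0, fun i => ?_, ?_, ?_⟩
  · dsimp only
    split_ifs with hi
    exacts [hw₀ i hi, le_rfl]
  · rw [sum_ite_mem, univ_inter, hw₁]
  · simp only [ite_smul, zero_smul]
    rw [sum_ite_mem, univ_inter, s.affineCombination_eq_linear_combination _ _ hw₁]

section BILP

variable {n m : ℕ} {v : Fin (n + 1) → Fin n → ℝ} {A : Matrix (Fin m) (Fin n) ℝ} {a b : Fin m → ℝ}

theorem BILPfeas.dotProduct_sub_eq {lam : Fin (n + 1) → ℝ} {x : Fin n → ℝ} {t : ℝ}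
    (h : BILPfeas v A a b lam x t) {t' : Fin (n + 1) → ℝ} {p : Fin n → ℝ} {γ : ℝ}
    (hH : ∀ i, p ⬝ᵥ v i - t' i = γ) :
    p ⬝ᵥ x - t = (∑ i, t' i * lam i - t) + γ := by
  obtain ⟨-, hsum, rfl, -⟩ := h
  rw [dotProduct_sum_smul_of_sub_eq p v t' hH hsum]
  ring

theorem exists_BILPfeas_of_mem_convexHull {x : Fin n → ℝ} {t : ℝ}
    (hx : x ∈ convexHull ℝ (Set.range v)) (hbin : ∀ j, x j = 0 ∨ x j = 1)
    (hP : (x, t) ∈ Pset A a b) : ∃ lam, BILPfeas v A a b lam x t := by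
  obtain ⟨w, hw₀, hw₁, hwx⟩ := exists_sum_smul_eq_of_mem_convexHull_range hx
  exact ⟨w, hw₀, hw₁, hwx.symm, hbin, hP⟩

end BILP

theorem stmt2_general {n m : ℕ} (f : Finset (Fin n) → ℝ)
    (v : Fin (n + 1) → Fin n → ℝ)
    (A : Matrix (Fin m) (Fin n) ℝ) (a b : Fin m → ℝ)
    (t' : Fin (n + 1) → ℝ) (p : Fin n → ℝ) (γ : ℝ)
    (hH : ∀ i, (∑ j, p j * v i j) - t' i = γ)
    (lamStar : Fin (n + 1) → ℝ) (tStar : ℝ)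
    (hopt : ∀ (lam : Fin (n + 1) → ℝ) (x : Fin n → ℝ) (t : ℝ), BILPfeas v A a b lam x t →
      (∑ i, t' i * lam i) - t ≤ (∑ i, t' i * lamStar i) - tStar)
    (cStar : ℝ) (hcdef : cStar = (∑ i, t' i * lamStar i) - tStar)
    (hc0 : cStar ≤ 0) :
    (∀ (lam : Fin (n + 1) → ℝ) (x : Fin n → ℝ) (t : ℝ), BILPfeas v A a b lam x t →
      (∑ j, p j * x j) - t ≤ γ) ∧
    (Dtilde f ⊆ Pset A a b →
      ∀ (x : Fin n → ℝ) (t : ℝ), x ∈ convexHull ℝ (Set.range v) →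
        (∀ j, x j = 0 ∨ x j = 1) → (x, t) ∈ Dtilde f →
        (∑ j, p j * x j) - t ≤ γ) := by
  have upper : ∀ lam x t, BILPfeas v A a b lam x t → p ⬝ᵥ x - t ≤ γ := fun lam x t h => by
    rw [h.dotProduct_sub_eq hH]
    linarith [hopt lam x t h]
  refine ⟨upper, fun hDP x t hx hbin hD => ?_⟩
  obtain ⟨lam, hlam⟩ := exists_BILPfeas_of_mem_convexHull hx hbin (hDP hD)
  exact upper lam x t hlam

/-- If `(λ*, x*, t*)` is an optimal solution of the BILP `max ∑ᵢ tᵢλᵢ - t` over the BILP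
feasible set with optimal value `c* = ∑ᵢ tᵢλᵢ* - t* ≤ 0`, then every `(x, t)` in the BILP
feasible set satisfies `pᵀx - t ≤ γ`, i.e. lies in the upper halfspace `H₊` of the
hyperplane `H` through the points `(vⁱ, tᵢ)`; in particular (provided `D̃ ⊆ P`) so does
every `(x, t) ∈ T ∩ D̃` with `x ∈ {0,1}ⁿ`. -/
theorem stmt2 {n m : ℕ} (f : Finset (Fin n) → ℝ)
    (hf : ∀ A B : Finset (Fin n), f (A ∪ B) + f (A ∩ B) ≤ f A + f B)
    (v : Fin (n + 1) → Fin n → ℝ) (hv : AffineIndependent ℝ v)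
    (A : Matrix (Fin m) (Fin n) ℝ) (a b : Fin m → ℝ)
    (t' : Fin (n + 1) → ℝ) (p : Fin n → ℝ) (γ : ℝ)
    (hH : ∀ i, (∑ j, p j * v i j) - t' i = γ)
    (lamStar : Fin (n + 1) → ℝ) (xStar : Fin n → ℝ) (tStar : ℝ)
    (hfeas : BILPfeas v A a b lamStar xStar tStar)
    (hopt : ∀ (lam : Fin (n + 1) → ℝ) (x : Fin n → ℝ) (t : ℝ), BILPfeas v A a b lam x t →
      (∑ i, t' i * lam i) - t ≤ (∑ i, t' i * lamStar i) - tStar)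
    (cStar : ℝ) (hcdef : cStar = (∑ i, t' i * lamStar i) - tStar)
    (hc0 : cStar ≤ 0) :
    (∀ (lam : Fin (n + 1) → ℝ) (x : Fin n → ℝ) (t : ℝ), BILPfeas v A a b lam x t →
      (∑ j, p j * x j) - t ≤ γ) ∧
    (Dtilde f ⊆ Pset A a b →
      ∀ (x : Fin n → ℝ) (t : ℝ), x ∈ convexHull ℝ (Set.range v) →
        (∀ j, x j = 0 ∨ x j = 1) → (x, t) ∈ Dtilde f →
        (∑ j, p j * x j) - t ≤ γ) :=
  stmt2_general f v A a b t' p γ hH lamStar tStar hopt cStar hcdef hc0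
end

section
/- Let r = Σᵢλᵢvⁱ with λᵢ ≥ 0, Σᵢλᵢ = 1, and r ≠ vⁱ for all i. For each i with λᵢ > 0, let Sⁱ = conv{v¹,...,v^{i−1}, r, v^{i+1},...,v^{n+1}} be the subsimplex obtained by replacing vⁱ with r. Then the collection {Sⁱ : λᵢ > 0} is a partition of S: the union of the Sⁱ over all i with λᵢ > 0 equals S, and for i ≠ j (both with λᵢ, λⱼ > 0) the interiors of Sⁱ and Sʲ are disjoint. -/
/-
Let `μ` and `λ` be the barycentric coordinates of a point `x ∈ S` and of `r`. If `i` minimizes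
`μₖ / λₖ` over the `k` with `λₖ > 0` and `t = μᵢ / λᵢ`, then `x = t r + ∑ₖ (μₖ - t λₖ) vᵏ` is a
convex combination in which `vⁱ` does not occur, so `x ∈ Sⁱ`. Conversely every point of `Sⁱ`
satisfies `λⱼ μᵢ ≤ λᵢ μⱼ` for all `j`, so `Sⁱ ∩ Sʲ` lies in the hyperplane `λⱼ μᵢ = λᵢ μⱼ`,
which has empty interior.
-/

open Set Function

theorem convexHull_range_update_subset {𝕜 E ι : Type*} [Semiring 𝕜] [PartialOrder 𝕜]
    [AddCommMonoid E] [Module 𝕜 E] [DecidableEq ι] {v : ι → E} {r : E}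
    (hr : r ∈ convexHull 𝕜 (range v)) (i : ι) :
    convexHull 𝕜 (range (update v i r)) ⊆ convexHull 𝕜 (range v) :=
  convexHull_min
    (range_subset_iff.2 <| (forall_update_iff v fun _ y => y ∈ convexHull 𝕜 (range v)).2
      ⟨hr, fun k _ => subset_convexHull 𝕜 _ (mem_range_self k)⟩)
    (convex_convexHull 𝕜 _)

section Cover

variable {R E ι : Type*} [Field R] [LinearOrder R] [IsStrictOrderedRing R]
  [AddCommGroup E] [Module R E] [Fintype ι]

theorem exists_pos_forall_div_mul_le {μ lam : ι → R} (hμ : ∀ k, 0 ≤ μ k) (hlam : ∀ k, 0 ≤ lam k)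
    (hlam1 : ∑ k, lam k = 1) : ∃ i, 0 < lam i ∧ ∀ k, μ i / lam i * lam k ≤ μ k := by
  classical
  have hne : (Finset.univ.filter fun k => 0 < lam k).Nonempty := by
    by_contra h
    rw [Finset.not_nonempty_iff_eq_empty, Finset.filter_eq_empty_iff] at h
    have : ∑ k, lam k ≤ 0 := Finset.sum_nonpos fun k hk => not_lt.mp (h hk)
    linarith
  obtain ⟨i, hi, hmin⟩ := Finset.exists_min_image _ (fun k => μ k / lam k) hne
  refine ⟨i, (Finset.mem_filter.mp hi).2, fun k => ?_⟩
  rcases (hlam k).eq_or_lt with hk | hk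
  · simpa [← hk] using hμ k
  · exact (le_div_iff₀ hk).mp (hmin k (Finset.mem_filter.mpr ⟨Finset.mem_univ k, hk⟩))

variable [DecidableEq ι]

theorem Fintype.sum_update_of_eq_zero {M : Type*} [AddCommMonoid M] {f : ι → M} {i : ι}
    (hi : f i = 0) (b : M) : ∑ k, update f i b k = b + ∑ k, f k := by
  rw [Finset.sum_update_of_mem (Finset.mem_univ i),
    Finset.sum_eq_sum_sdiff_singleton_add (Finset.mem_univ i) f, hi, add_zero]

theorem smul_add_sum_smul_mem_convexHull_update (v : ι → E) (r : E) {i : ι} {t : R}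
    {c : ι → R} (ht : 0 ≤ t) (hc : ∀ k, 0 ≤ c k) (hci : c i = 0) (hsum : t + ∑ k, c k = 1) :
    t • r + ∑ k, c k • v k ∈ convexHull R (range (update v i r)) := by
  refine mem_convexHull_of_exists_fintype (update c i t) (update v i r)
    ((forall_update_iff c fun _ a => 0 ≤ a).2 ⟨ht, fun k _ => hc k⟩) ?_
    (fun k => mem_range_self k) ?_
  · rw [Fintype.sum_update_of_eq_zero hci, hsum]
  · have hsmul : ∀ k, update c i t k • update v i r k = update (fun k => c k • v k) i (t • r) k :=
      apply_update₂ (fun _ a b => a • b) c v i t r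
    simp_rw [hsmul]
    rw [Fintype.sum_update_of_eq_zero (by simp [hci])]

theorem exists_sum_smul_mem_convexHull_update (v : ι → E) {μ lam : ι → R}
    (hμ0 : ∀ k, 0 ≤ μ k) (hμ1 : ∑ k, μ k = 1) (hlam0 : ∀ k, 0 ≤ lam k) (hlam1 : ∑ k, lam k = 1) :
    ∃ i, 0 < lam i ∧ ∑ k, μ k • v k ∈ convexHull R (range (update v i (∑ k, lam k • v k))) := by
  obtain ⟨i, hi, hmin⟩ := exists_pos_forall_div_mul_le hμ0 hlam0 hlam1
  set t := μ i / lam i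
  have hdecomp : ∑ k, μ k • v k = t • ∑ k, lam k • v k + ∑ k, (μ k - t * lam k) • v k := by
    simp only [Finset.smul_sum, smul_smul, ← Finset.sum_add_distrib, ← add_smul, add_sub_cancel]
  refine ⟨i, hi, hdecomp ▸ smul_add_sum_smul_mem_convexHull_update v _ (div_nonneg (hμ0 i) hi.le)
    (fun k => sub_nonneg.2 (hmin k)) (by simp [t, div_mul_cancel₀ _ hi.ne']) ?_⟩
  rw [Finset.sum_sub_distrib, ← Finset.mul_sum, hμ1, hlam1]
  ring

theorem AffineBasis.biUnion_convexHull_update_eq (b : AffineBasis ι R E) {r : E}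
    (hr : r ∈ convexHull R (range b)) :
    ⋃ i ∈ {i | 0 < b.coord i r}, convexHull R (range (update b i r)) =
      convexHull R (range b) := by
  refine (iUnion₂_subset fun i _ => convexHull_range_update_subset hr i).antisymm fun x hx => ?_
  rw [b.convexHull_eq_nonneg_coord] at hr hx
  obtain ⟨i, hi, hxi⟩ := exists_sum_smul_mem_convexHull_update b hx
    (b.sum_coord_apply_eq_one x) hr (b.sum_coord_apply_eq_one r)
  rw [b.linear_combination_coord_eq_self, b.linear_combination_coord_eq_self] at hxi
  exact mem_biUnion hi hxi

end Cover

section Interior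

theorem AffineBasis.coord_mul_le_of_mem_convexHull_update {R E ι : Type*} [Field R] [LinearOrder R]
    [IsStrictOrderedRing R] [AddCommGroup E] [Module R E] [DecidableEq ι]
    (b : AffineBasis ι R E) (r : E) {i : ι} (hi : 0 ≤ b.coord i r) (j : ι) {x : E}
    (hx : x ∈ convexHull R (range (update b i r))) :
    b.coord j r * b.coord i x ≤ b.coord i r * b.coord j x := by
  let g : E →ᵃ[R] R := b.coord j r • b.coord i - b.coord i r • b.coord j
  suffices convexHull R (range (update b i r)) ⊆ g ⁻¹' Iic 0 by simpa [g] using this hx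
  refine convexHull_min (range_subset_iff.2 <| (forall_update_iff _ fun _ y => y ∈ g ⁻¹' Iic 0).2
    ⟨?_, fun k hk => ?_⟩) ((convex_Iic 0).affine_preimage g)
  · simp [g, mul_comm]
  · have : 0 ≤ b.coord j (b k) := by rw [b.coord_apply]; split_ifs <;> norm_num
    simp only [g, mem_preimage, mem_Iic, AffineMap.coe_sub, AffineMap.coe_smul, Pi.sub_apply,
      Pi.smul_apply, smul_eq_mul, b.coord_apply_ne hk.symm, mul_zero, zero_sub, neg_nonpos]
    positivity

variable {E : Type*} [NormedAddCommGroup E] [NormedSpace ℝ E]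

theorem AffineMap.eq_const_of_nonempty_interior_preimage {F : Type*} [AddCommGroup F]
    [Module ℝ F] (g : E →ᵃ[ℝ] F) {c : F} (h : (interior (g ⁻¹' {c})).Nonempty) :
    g = AffineMap.const ℝ E c := by
  have hconv : Convex ℝ (g ⁻¹' {c}) := (convex_singleton c).affine_preimage g
  exact AffineMap.ext_on (affineSpan_eq_top_of_nonempty_interior (hconv.convexHull_eq.symm ▸ h))
    fun x hx => hx

theorem AffineBasis.interior_convexHull_update_inter_eq_empty {ι : Type*} [DecidableEq ι]
    (b : AffineBasis ι ℝ E) (r : E) {i j : ι} (hij : i ≠ j) (hi : 0 < b.coord i r)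
    (hj : 0 ≤ b.coord j r) :
    interior (convexHull ℝ (range (update b i r))) ∩
      interior (convexHull ℝ (range (update b j r))) = ∅ := by
  let g : E →ᵃ[ℝ] ℝ := b.coord j r • b.coord i - b.coord i r • b.coord j
  have hsub : convexHull ℝ (range (update b i r)) ∩ convexHull ℝ (range (update b j r)) ⊆
      g ⁻¹' {0} := fun x hx => by
    have h1 := b.coord_mul_le_of_mem_convexHull_update r hi.le j hx.1
    have h2 := b.coord_mul_le_of_mem_convexHull_update r hj i hx.2
    simp only [g, mem_preimage, mem_singleton_iff, AffineMap.coe_sub, AffineMap.coe_smul,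
      Pi.sub_apply, Pi.smul_apply, smul_eq_mul]
    linarith
  rw [← interior_inter, ← not_nonempty_iff_eq_empty]
  intro hne
  have hgj := congrArg (· (b j)) (g.eq_const_of_nonempty_interior_preimage
    (hne.mono (interior_mono hsub)))
  simp only [g, AffineMap.coe_sub, AffineMap.coe_smul, Pi.sub_apply, Pi.smul_apply, smul_eq_mul,
    b.coord_apply_ne hij, b.coord_apply_eq, mul_zero, mul_one, zero_sub, AffineMap.const_apply,
    neg_eq_zero] at hgj
  exact hi.ne' hgj

end Interior

theorem stmt5_general {n : ℕ} (v : Fin (n + 1) → Fin n → ℝ) (hv : AffineIndependent ℝ v)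
    (lam : Fin (n + 1) → ℝ) (hlam0 : ∀ i, 0 ≤ lam i) (hlam1 : (∑ i, lam i) = 1)
    (r : Fin n → ℝ) (hr : r = ∑ i, lam i • v i) :
    (⋃ i ∈ {i : Fin (n + 1) | 0 < lam i},
        convexHull ℝ (Set.range (Function.update v i r))) = convexHull ℝ (Set.range v) ∧
    ∀ i j : Fin (n + 1), i ≠ j → 0 < lam i → 0 < lam j →
      interior (convexHull ℝ (Set.range (Function.update v i r))) ∩
        interior (convexHull ℝ (Set.range (Function.update v j r))) = ∅ := by
  let b : AffineBasis (Fin (n + 1)) ℝ (Fin n → ℝ) :=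
    ⟨v, hv, hv.affineSpan_eq_top_iff_card_eq_finrank_add_one.2 (by simp)⟩
  have hcoord : ∀ k, b.coord k r = lam k := fun k => by
    rw [hr, ← Finset.univ.affineCombination_eq_linear_combination v lam hlam1]
    exact b.coord_apply_combination_of_mem (Finset.mem_univ k) hlam1
  obtain rfl : lam = fun k => b.coord k r := funext fun k => (hcoord k).symm
  have hrS : r ∈ convexHull ℝ (range b) := by
    rw [b.convexHull_eq_nonneg_coord]
    exact hlam0
  exact ⟨b.biUnion_convexHull_update_eq hrS,
    fun i j hij hi hj => b.interior_convexHull_update_inter_eq_empty r hij hi hj.le⟩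

/-- Radial subdivision of a simplex: let `S = conv{v¹,...,v^{n+1}}` be an `n`-simplex and
`r = ∑ᵢ λᵢvⁱ` a point of `S` (with `λᵢ ≥ 0`, `∑ᵢ λᵢ = 1`) distinct from every vertex.
For each `i` with `λᵢ > 0`, let `Sⁱ` be the subsimplex obtained by replacing `vⁱ` with `r`.
Then `{Sⁱ : λᵢ > 0}` is a partition of `S`: the union of the `Sⁱ` equals `S`, and for
`i ≠ j` the interiors of `Sⁱ` and `Sʲ` are disjoint. -/
theorem stmt5 {n : ℕ} (v : Fin (n + 1) → Fin n → ℝ) (hv : AffineIndependent ℝ v)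
    (lam : Fin (n + 1) → ℝ) (hlam0 : ∀ i, 0 ≤ lam i) (hlam1 : (∑ i, lam i) = 1)
    (r : Fin n → ℝ) (hr : r = ∑ i, lam i • v i) (hrv : ∀ i, r ≠ v i) :
    (⋃ i ∈ {i : Fin (n + 1) | 0 < lam i},
        convexHull ℝ (Set.range (Function.update v i r))) = convexHull ℝ (Set.range v) ∧
    ∀ i j : Fin (n + 1), i ≠ j → 0 < lam i → 0 < lam j →
      interior (convexHull ℝ (Set.range (Function.update v i r))) ∩
        interior (convexHull ℝ (Set.range (Function.update v j r))) = ∅ :=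
  stmt5_general v hv lam hlam0 hlam1 r hr
end
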